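/- Let M, N be interval modules over ℝⁿ and δ ≥ 0. Then d_I(M,N) ≤ δ if and only if: (i) δ ≥ δ* := sup_x d_I(M|_{Δ_x}, N|_{Δ_x}), and (ii) for all δ' > δ, every intersection component of M and N_{→δ'} is either (M, N_{→δ'})-valid or δ'_{(M,N_{→δ'})}-trivializable, and symmetrically every intersection component of M_{→δ'} and N is either (N, M_{→δ'})-valid or δ'_{(N,M_{→δ'})}-trivializable. -/

import Mathlib

open scoped ENNReal NNReal
open Filter
noncomputable section
attribute [local instance] Classical.propDecidable
set_option linter.unusedVariables false

/-- Points of the poset ℝⁿ. The product instance gives the pointwise partial order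
and the sup-norm metric. -/
abbrev Pt (n : ℕ) := Fin n → ℝ

/-- The diagonal vector δ⃗ = (δ,...,δ). -/
def diag (n : ℕ) (δ : ℝ) : Pt n := fun _ => δ

lemma le_add_diag {n : ℕ} (x : Pt n) {δ : ℝ} (hδ : 0 ≤ δ) : x ≤ x + diag n δ :=
  fun _ => le_add_of_nonneg_right hδ

/-- A (p.f.d.-agnostic) persistence module over the poset ℝⁿ with values in
k-vector spaces: a functor from ℝⁿ to Vec. -/
structure PersMod (n : ℕ) (k : Type*) [Field k] where
  V : Pt n → Type*
  [addgrp : ∀ x, AddCommGroup (V x)]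
  [mod : ∀ x, Module k (V x)]
  ρ : ∀ {x y : Pt n}, x ≤ y → (V x →ₗ[k] V y)
  ρ_id : ∀ x : Pt n, ρ (le_refl x) = LinearMap.id
  ρ_comp : ∀ {x y z : Pt n} (h1 : x ≤ y) (h2 : y ≤ z), ρ (h1.trans h2) = (ρ h2).comp (ρ h1)

attribute [instance] PersMod.addgrp PersMod.mod

variable {n : ℕ} {k : Type*} [Field k]

/-- A morphism (natural transformation) of persistence modules. -/
structure PersHom (M N : PersMod n k) where
  app : ∀ x, M.V x →ₗ[k] N.V x
  natural : ∀ {x y : Pt n} (h : x ≤ y), (app y).comp (M.ρ h) = (N.ρ h).comp (app x)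

/-- A δ-interleaving between M and N: families φ_x : M_x → N_{x+δ⃗},
ψ_x : N_x → M_{x+δ⃗} satisfying square and triangular commutativity. -/
def PersMod.Interleaved (M N : PersMod n k) (δ : ℝ≥0) : Prop :=
  ∃ (φ : ∀ x : Pt n, M.V x →ₗ[k] N.V (x + diag n (δ : ℝ)))
    (ψ : ∀ x : Pt n, N.V x →ₗ[k] M.V (x + diag n (δ : ℝ))),
    (∀ {x y : Pt n} (h : x ≤ y),
        (φ y).comp (M.ρ h) = (N.ρ (add_le_add_left h _)).comp (φ x)) ∧
    (∀ {x y : Pt n} (h : x ≤ y),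
        (ψ y).comp (N.ρ h) = (M.ρ (add_le_add_left h _)).comp (ψ x)) ∧
    (∀ x : Pt n, M.ρ ((le_add_diag x δ.coe_nonneg).trans (le_add_diag _ δ.coe_nonneg))
        = (ψ (x + diag n (δ : ℝ))).comp (φ x)) ∧
    (∀ x : Pt n, N.ρ ((le_add_diag x δ.coe_nonneg).trans (le_add_diag _ δ.coe_nonneg))
        = (φ (x + diag n (δ : ℝ))).comp (ψ x))

/-- The interleaving distance (∞ if no interleaving exists). -/
def PersMod.dI (M N : PersMod n k) : ℝ≥0∞ :=
  ⨅ (δ : ℝ≥0) (_ : M.Interleaved N δ), (δ : ℝ≥0∞)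

/-- The diagonal shift M_{→d}. -/
def PersMod.dshift (M : PersMod n k) (d : ℝ) : PersMod n k where
  V x := M.V (x + diag n d)
  ρ h := M.ρ (add_le_add_left h _)
  ρ_id x := M.ρ_id _
  ρ_comp h1 h2 := M.ρ_comp _ _

/-- M is c-trivial: every structure map over a diagonal shift by c is zero. -/
def PersMod.DTrivial (M : PersMod n k) (c : ℝ≥0) : Prop :=
  ∀ x : Pt n, M.ρ (le_add_diag x c.coe_nonneg) = 0

/-- The 1-parameter slice of M along the diagonal line through x. -/
def PersMod.slice (M : PersMod n k) (x : Pt n) : PersMod 1 k where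
  V t := M.V (x + diag n (t 0))
  ρ {t t'} h := M.ρ (fun i => add_le_add_right (h 0) (x i))
  ρ_id t := M.ρ_id _
  ρ_comp h1 h2 := M.ρ_comp _ _

/-- δ* = sup over diagonal lines of the slice interleaving distances. -/
def deltaStar (M N : PersMod n k) : ℝ≥0∞ :=
  ⨆ x : Pt n, (M.slice x).dI (N.slice x)

/-- Finite direct sum of persistence modules. -/
def dirSum {ι : Type} [Fintype ι] (Ms : ι → PersMod n k) : PersMod n k where
  V x := ∀ i, (Ms i).V x
  ρ h := LinearMap.pi (fun i => ((Ms i).ρ h).comp (LinearMap.proj i))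
  ρ_id x := by
    apply LinearMap.ext; intro v; funext i
    simp [(Ms i).ρ_id]
  ρ_comp h1 h2 := by
    apply LinearMap.ext; intro v; funext i
    show ((Ms i).ρ (h1.trans h2)) (v i) = _
    rw [(Ms i).ρ_comp h1 h2]; rfl

/-- Zigzag reachability inside a set: p ≤ p₁ ≥ p₂ ≤ ... with all points in A. -/
def Zigzag (A : Set (Pt n)) : Pt n → Pt n → Prop :=
  Relation.ReflTransGen (fun a b => a ∈ A ∧ b ∈ A ∧ (a ≤ b ∨ b ≤ a))

/-- An interval: nonempty, order-convex, zigzag-connected. -/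
def IsPInterval (I : Set (Pt n)) : Prop :=
  I.Nonempty ∧ (∀ p ∈ I, ∀ q ∈ I, ∀ r, p ≤ r → r ≤ q → r ∈ I) ∧
    ∀ p ∈ I, ∀ q ∈ I, Zigzag I p q

/-- Q is a (zigzag-)connected component of A. -/
def IsComponent (A Q : Set (Pt n)) : Prop :=
  ∃ p ∈ A, Q = {q | Zigzag A p q}

/-- The fibre of the interval module with interval I: k on I, 0 elsewhere,
realised as a submodule of k. -/
def subOf (k : Type*) [Field k] (I : Set (Pt n)) (x : Pt n) : Submodule k k :=
  if x ∈ I then ⊤ else ⊥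

/-- The canonical map between fibres: identity within I, zero otherwise. -/
def stepFun (I : Set (Pt n)) (x y : Pt n) :
    ↥(subOf k I x) →ₗ[k] ↥(subOf k I y) where
  toFun v := ⟨if y ∈ I then (v : k) else 0, by
    by_cases hy : y ∈ I <;> simp only [subOf, hy, if_true, if_false, Submodule.mem_top, Submodule.zero_mem]⟩
  map_add' a b := by
    by_cases hy : y ∈ I <;> · apply Subtype.ext; simp [hy]
  map_smul' c a := by
    by_cases hy : y ∈ I <;> · apply Subtype.ext; simp [hy]

/-- The interval module with interval I. -/
def IntervalMod (k : Type*) [Field k] (I : Set (Pt n)) (hI : IsPInterval I) :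
    PersMod n k where
  V x := ↥(subOf k I x)
  ρ {x y} _ := stepFun I x y
  ρ_id x := by
    apply LinearMap.ext; intro v
    apply Subtype.ext
    by_cases hx : x ∈ I
    · simp [stepFun, hx]
    · have hv : (v : k) = 0 := by have h2 := v.2; simp only [subOf, hx, if_false] at h2; exact (Submodule.mem_bot k).1 h2
      simp [stepFun, hx, hv]
  ρ_comp {x y z} h1 h2 := by
    apply LinearMap.ext; intro v
    apply Subtype.ext
    by_cases hz : z ∈ I
    · by_cases hy : y ∈ I
      · simp [stepFun, hy, hz]
      · have hx : x ∉ I := fun hx => hy (hI.2.1 x hx z hz y h1 h2)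
        have hv : (v : k) = 0 := by have h2 := v.2; simp only [subOf, hx, if_false] at h2; exact (Submodule.mem_bot k).1 h2
        simp [stepFun, hy, hz, hv]
    · simp [stepFun, hz]

/-- Lower boundary L(I). -/
def lowerBd (I : Set (Pt n)) : Set (Pt n) :=
  {x | x ∈ closure I ∧ ∀ y : Pt n, (∀ i, y i < x i) → y ∉ I}

/-- Upper boundary U(I). -/
def upperBd (I : Set (Pt n)) : Set (Pt n) :=
  {x | x ∈ closure I ∧ ∀ y : Pt n, (∀ i, x i < y i) → y ∉ I}

/-- Diagonal distance dl(x, A): the infimum of sup-norm distances from x to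
points of A along the diagonal line Δ_x, ∞ when Δ_x ∩ A = ∅. -/
def dl (x : Pt n) (A : Set (Pt n)) : ℝ≥0∞ :=
  ⨅ (α : ℝ) (_ : x + diag n α ∈ A), ENNReal.ofReal |α|

/-- d_triv^{(M,N)}(x) = max(dl(x,U(I_M))/2, dl(x,L(I_N))/2). -/
def dtriv (IM IN : Set (Pt n)) (x : Pt n) : ℝ≥0∞ :=
  max (dl x (upperBd IM) / 2) (dl x (lowerBd IN) / 2)

/-- An intersection component with interval Q is δ_{(M,N)}-trivializable. -/
def Trivializable (IM IN Q : Set (Pt n)) (δ : ℝ≥0∞) : Prop :=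
  ∀ x ∈ Q, dtriv IM IN x < δ

/-- (M,N)-validity of an intersection component with interval Q. -/
def MNValid (IM IN Q : Set (Pt n)) : Prop :=
  ∀ x ∈ Q, (∀ y : Pt n, y ≤ x → y ∈ IM → y ∈ IN) ∧
    (∀ z : Pt n, x ≤ z → z ∈ IN → z ∈ IM)

/-- The interval of the shifted module N_{→d}. -/
def shiftSet (I : Set (Pt n)) (d : ℝ) : Set (Pt n) := {x | x + diag n d ∈ I}

/-- A vertex of (the boundary of) a set: a boundary point through which no
nontrivial line segment of the boundary passes. -/
def IsVertex (I : Set (Pt n)) (x : Pt n) : Prop :=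
  x ∈ frontier I ∧
    ¬ ∃ v : Pt n, v ≠ 0 ∧ ∃ ε > (0:ℝ), ∀ t : ℝ, |t| < ε → x + t • v ∈ frontier I

/-- An axis-aligned (possibly degenerate) rectangle. -/
def IsRect (R : Set (Pt n)) : Prop := ∃ a b : Pt n, a ≤ b ∧ R = Set.Icc a b

/-- A discretely presented interval: a finite union of rectangles. -/
def DiscPresented (I : Set (Pt n)) : Prop :=
  ∃ F : Finset (Set (Pt n)), (∀ R ∈ F, IsRect R) ∧ I = ⋃ R ∈ F, (R : Set (Pt n))

/-- f is a facet of I orthogonal to direction i: contained in a hyperplane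
{y_i = c}, contained in the lower or upper boundary, and (n−1)-dimensional
(contains a full hyperplane patch around one of its points). -/
def IsFacetDir (I : Set (Pt n)) (f : Set (Pt n)) (i : Fin n) : Prop :=
  ∃ c : ℝ, f ⊆ {y | y i = c} ∧ (f ⊆ lowerBd I ∨ f ⊆ upperBd I) ∧
    ∃ z ∈ f, ∃ ε > (0:ℝ), ∀ y : Pt n, y i = c → dist y z < ε → y ∈ f

/-- The set D(x) of the four diagonal boundary distances. -/
def candD (IM IN : Set (Pt n)) (x : Pt n) : Set ℝ≥0∞ :=
  {dl x (lowerBd IM), dl x (lowerBd IN), dl x (upperBd IM), dl x (upperBd IN)}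

/-- The candidate set S. -/
def candS (IM IN : Set (Pt n)) : Set ℝ≥0∞ :=
  {d | ∃ x : Pt n, (IsVertex IM x ∨ IsVertex IN x) ∧
    (d ∈ candD IM IN x ∨ 2 * d ∈ candD IM IN x)}

/-- One-sided limit lim_{ε→0+} f(x − ε v) (junk value if the limit fails to exist). -/
def dlim (f : Pt n → ℤ) (x v : Pt n) : ℤ :=
  limUnder (nhdsWithin (0:ℝ) (Set.Ioi 0)) (fun ε : ℝ => f (x - ε • v))

/-- The indicator vector Σ_{i ∈ s} e_i. -/
def basisVec (n : ℕ) (s : Finset (Fin n)) : Pt n := fun i => if i ∈ s then 1 else 0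

/-- The differential Δf(x) = Σ_k (−1)^k Σ_{|s|=k} lim_{ε→0+} f(x − ε Σ_{i∈s} e_i). -/
def diffl (f : Pt n → ℤ) (x : Pt n) : ℤ :=
  ∑ s : Finset (Fin n), (-1 : ℤ) ^ s.card * dlim f x (basisVec n s)

/-- Right continuity of f : ℝⁿ → ℤ. -/
def RightCont (f : Pt n → ℤ) : Prop :=
  ∀ x : Pt n, Filter.Tendsto f (nhdsWithin x (Set.Ici x)) (nhds (f x))

/-- A nice function: right continuous, finitely supported differential,
support bounded below. -/
def NiceFn (f : Pt n → ℤ) : Prop :=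
  RightCont f ∧ {x | diffl f x ≠ 0}.Finite ∧ ∃ a : ℝ, ∀ x, f x ≠ 0 → ∀ i, a ≤ x i

/-- Positive part Δf₊. -/
def difflp (f : Pt n → ℤ) (x : Pt n) : ℤ := max (diffl f x) 0
/-- Negative part Δf₋. -/
def difflm (f : Pt n → ℤ) (x : Pt n) : ℤ := min (diffl f x) 0

/-- Σ_{y ≤ x} g(y), as a finite sum over the support. -/
def sumLe (g : Pt n → ℤ) (x : Pt n) : ℤ := ∑ᶠ y ∈ {y : Pt n | y ≤ x}, g y

/-- The δ-extension f^{+δ}(x) = f_{Σ+}(x+δ⃗) + f_{Σ−}(x−δ⃗). -/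
def extend (f : Pt n → ℤ) (δ : ℝ) (x : Pt n) : ℤ :=
  sumLe (difflp f) (x + diag n δ) + sumLe (difflm f) (x - diag n δ)

/-- The δ-shrinking f^{−δ}(x) = f_{Σ−}(x+δ⃗) + f_{Σ+}(x−δ⃗). -/
def shrink (f : Pt n → ℤ) (δ : ℝ) (x : Pt n) : ℤ :=
  sumLe (difflm f) (x + diag n δ) + sumLe (difflp f) (x - diag n δ)

/-- d₊(f,g) = inf{δ : f ≤ g^{+δ}, g ≤ f^{+δ}}. -/
def dplus (f g : Pt n → ℤ) : ℝ≥0∞ :=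
  ⨅ (δ : ℝ≥0) (_ : (∀ x, f x ≤ extend g δ x) ∧ (∀ x, g x ≤ extend f δ x)), (δ : ℝ≥0∞)

/-- d₋(f,g) = inf{δ : f ≥ g^{−δ}, g ≥ f^{−δ}}. -/
def dminus (f g : Pt n → ℤ) : ℝ≥0∞ :=
  ⨅ (δ : ℝ≥0) (_ : (∀ x, shrink g δ x ≤ f x) ∧ (∀ x, shrink f δ x ≤ g x)), (δ : ℝ≥0∞)

/-- The dimension distance d₀ = min(d₋, d₊). -/
def d0 (f g : Pt n → ℤ) : ℝ≥0∞ := min (dminus f g) (dplus f g)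

/-- The dimension function dm M(x) = dim M_x (as an integer). -/
def dmFun (M : PersMod n k) : Pt n → ℤ := fun x => (Module.finrank k (M.V x) : ℤ)

/-- A nice persistence module: all structure maps over sufficiently small
diagonal shifts are injective or surjective. -/
def PersMod.Nice (M : PersMod n k) : Prop :=
  ∃ ε₀ > (0:ℝ), ∀ ε : ℝ, ∀ h0 : 0 < ε, ε < ε₀ → ∀ x : Pt n,
    Function.Injective (M.ρ (le_add_diag x h0.le)) ∨
      Function.Surjective (M.ρ (le_add_diag x h0.le))

/-- Composition ρ_i ∘ ... ∘ ρ₁ of a chain of linear maps. -/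
def chainComp {K : Type*} [Field K] (V : ℕ → Type*) [∀ i, AddCommGroup (V i)]
    [∀ i, Module K (V i)] (ρ : ∀ i, V i →ₗ[K] V (i+1)) : ∀ i, V 0 →ₗ[K] V i
  | 0 => LinearMap.id
  | (i+1) => (ρ i).comp (chainComp V ρ i)

/-!
Slices of a `δ`-interleaving are `δ`-interleavings, so `δ* ≤ d_I`. Given an `e`-interleaving
`(φ, ψ)` of interval modules and `e < δ'`, naturality makes the vanishing of `φ_x` constant along
zigzags in `I_M ∩ I_{N→δ'}`. On a component where `φ` does not vanish, naturality gives validity;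
where it vanishes, the triangle identities show that along the diagonal `I_M` ends within `2e`
above each point and `I_{N→δ'}` starts within `2e` below it, i.e. the component is
`δ'`-trivializable.

Conversely, for `δ' > δ` the maps that are the identity on valid components and zero elsewhere
form a `δ'`-interleaving. Naturality holds because validity is inherited along comparable points.
For the triangle identities, a component containing a diagonal segment `[x, x + 2δ']` of `I_M`
cannot be trivializable, and `δ* < δ'` puts the midpoint `x + δ'` in `I_N`.
-/

open Set Topology

section Diagonal

variable {n : ℕ}

lemma add_diag_add_diag (x : Pt n) (a b : ℝ) : x + diag n a + diag n b = x + diag n (a + b) := by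
  funext i; simp only [Pi.add_apply, diag, add_assoc]

@[simp] lemma add_diag_zero (x : Pt n) : x + diag n 0 = x := by
  funext i; simp [diag]

lemma add_diag_mono (x : Pt n) : Monotone fun a : ℝ => x + diag n a :=
  fun _ _ h => add_le_add_right (fun _ => h) x

lemma continuous_add_diag (x : Pt n) : Continuous fun a : ℝ => x + diag n a :=
  continuous_const.add (continuous_pi fun _ => continuous_id)

lemma exists_pos_add_diag_le {a y : Pt n} (h : ∀ i, a i < y i) : ∃ m > 0, a + diag n m ≤ y := by
  have : ∀ᶠ m in 𝓝[>] (0 : ℝ), 0 < m ∧ ∀ i, m ≤ y i - a i :=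
    eventually_mem_nhdsWithin.and <| eventually_all.2 fun i =>
      (eventually_le_nhds (sub_pos.2 (h i))).filter_mono nhdsWithin_le_nhds
  obtain ⟨m, hm, hle⟩ := this.exists
  exact ⟨m, hm, fun i => by simp only [Pi.add_apply, diag]; linarith [hle i]⟩

end Diagonal

lemma IsPInterval.ordConnected {n : ℕ} {I : Set (Pt n)} (hI : IsPInterval I) : I.OrdConnected :=
  ⟨fun _ hp _ hq _ hr => hI.2.1 _ hp _ hq _ hr.1 hr.2⟩

lemma Set.OrdConnected.shiftSet {n : ℕ} {I : Set (Pt n)} (hI : I.OrdConnected) (d : ℝ) :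
    (shiftSet I d).OrdConnected :=
  hI.preimage_mono fun _ _ h => add_le_add_left h _

section Boundary

lemma exists_mem_Icc_closure_upperBounds {s : Set ℝ} (hs : s.OrdConnected) (h0 : 0 ∈ s)
    {c : ℝ} (hc0 : 0 ≤ c) (hc : c ∉ s) : ∃ β ∈ Icc 0 c, β ∈ closure s ∧ β ∈ upperBounds s := by
  set t := s ∩ Ici 0
  have hlt : ∀ γ ∈ t, γ < c := fun γ hγ =>
    lt_of_not_ge fun hcγ => hc (hs.out h0 hγ.1 ⟨hc0, hcγ⟩)
  have h0t : (0 : ℝ) ∈ t := ⟨h0, mem_Ici.2 le_rfl⟩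
  have hbdd : BddAbove t := ⟨c, fun γ hγ => (hlt γ hγ).le⟩
  refine ⟨sSup t, ⟨le_csSup hbdd h0t, csSup_le ⟨0, h0t⟩ fun γ hγ => (hlt γ hγ).le⟩,
    closure_mono inter_subset_left (csSup_mem_closure ⟨0, h0t⟩ hbdd), fun γ hγ => ?_⟩
  rcases le_total 0 γ with hγ0 | hγ0
  · exact le_csSup hbdd ⟨hγ, hγ0⟩
  · exact hγ0.trans (le_csSup hbdd h0t)

variable {n : ℕ} {I : Set (Pt n)}

lemma exists_add_diag_mem_upperBd (hI : I.OrdConnected) {x : Pt n} (hx : x ∈ I) {c : ℝ}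
    (hc0 : 0 ≤ c) (hc : x + diag n c ∉ I) : ∃ α ∈ Icc 0 c, x + diag n α ∈ upperBd I := by
  obtain ⟨β, hβ, hβcl, hβub⟩ := exists_mem_Icc_closure_upperBounds
    (hI.preimage_mono (add_diag_mono x)) (by simpa using hx) hc0 hc
  refine ⟨β, hβ, map_mem_closure (f := fun a => x + diag n a) (continuous_add_diag x) hβcl
    fun _ h => h, fun y hy hyI => ?_⟩
  obtain ⟨m, hm, hmy⟩ := exists_pos_add_diag_le hy
  have : x + diag n (β + m) ∈ I := hI.out hx hyI
    ⟨le_add_diag x (by linarith [hβ.1]), by rwa [← add_diag_add_diag]⟩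
  linarith [hβub this]

lemma exists_add_diag_neg_mem_lowerBd (hI : I.OrdConnected) {x : Pt n} (hx : x ∈ I) {c : ℝ}
    (hc0 : 0 ≤ c) (hc : x + diag n (-c) ∉ I) : ∃ α ∈ Icc 0 c, x + diag n (-α) ∈ lowerBd I := by
  obtain ⟨β, hβ, hβcl, hβub⟩ := exists_mem_Icc_closure_upperBounds
    (hI.preimage_anti fun a b h => add_diag_mono x (neg_le_neg h)) (by simpa using hx) hc0 hc
  refine ⟨β, hβ, map_mem_closure (f := fun a => x + diag n (-a))
    ((continuous_add_diag x).comp continuous_neg) hβcl fun _ h => h,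
    fun y hy hyI => ?_⟩
  obtain ⟨m, hm, hmy⟩ := exists_pos_add_diag_le hy
  have : x + diag n (-(β + m)) ∈ I := hI.out hyI hx
    ⟨fun i => by have := hmy i; simp only [Pi.add_apply, diag] at this ⊢; linarith,
     fun i => by simp only [Pi.add_apply, diag]; linarith [hβ.1]⟩
  linarith [hβub this]

lemma notMem_of_add_diag_mem_upperBd {x : Pt n} {a b : ℝ} (hx : x + diag n a ∈ upperBd I)
    (hab : a < b) : x + diag n b ∉ I :=
  hx.2 _ fun i => by simp only [Pi.add_apply, diag]; linarith

lemma notMem_of_add_diag_mem_lowerBd {x : Pt n} {a b : ℝ} (hx : x + diag n a ∈ lowerBd I)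
    (hba : b < a) : x + diag n b ∉ I :=
  hx.2 _ fun i => by simp only [Pi.add_apply, diag]; linarith

end Boundary

section DiagonalDistance

variable {n : ℕ}

lemma dl_le_of_add_diag_mem {x : Pt n} {A : Set (Pt n)} {α : ℝ} (h : x + diag n α ∈ A) :
    dl x A ≤ ENNReal.ofReal |α| :=
  iInf₂_le α h

lemma exists_add_diag_mem_of_dl_lt {x : Pt n} {A : Set (Pt n)} {r : ℝ}
    (h : dl x A < ENNReal.ofReal r) : ∃ α, x + diag n α ∈ A ∧ |α| < r := by
  simp only [dl, iInf_lt_iff] at h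
  obtain ⟨α, hα, hlt⟩ := h
  exact ⟨α, hα, (ENNReal.ofReal_lt_ofReal_iff'.1 hlt).1⟩

lemma two_mul_coe_eq_ofReal (d : ℝ≥0) : 2 * (d : ℝ≥0∞) = ENNReal.ofReal (2 * d) := by
  rw [ENNReal.ofReal_mul zero_le_two, ENNReal.ofReal_ofNat, ENNReal.ofReal_coe_nnreal]

lemma dtriv_lt_iff {I J : Set (Pt n)} {x : Pt n} {c : ℝ≥0∞} :
    dtriv I J x < c ↔ dl x (upperBd I) < 2 * c ∧ dl x (lowerBd J) < 2 * c := by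
  simp only [dtriv, max_lt_iff,
    ENNReal.div_lt_iff (Or.inl two_ne_zero) (Or.inl ENNReal.ofNat_ne_top), mul_comm c]

variable {I J Q : Set (Pt n)} {x : Pt n}

lemma Trivializable.notMem {d : ℝ≥0} (h : Trivializable I J Q d) (hx : x ∈ Q) :
    x + diag n (2 * d) ∉ I ∧ x + diag n (-(2 * d)) ∉ J := by
  obtain ⟨hU, hL⟩ := dtriv_lt_iff.1 (h x hx)
  rw [two_mul_coe_eq_ofReal] at hU hL
  obtain ⟨α, hα, hαd⟩ := exists_add_diag_mem_of_dl_lt hU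
  obtain ⟨β, hβ, hβd⟩ := exists_add_diag_mem_of_dl_lt hL
  exact ⟨notMem_of_add_diag_mem_upperBd hα (abs_lt.1 hαd).2,
    notMem_of_add_diag_mem_lowerBd hβ (abs_lt.1 hβd).1⟩

lemma dtriv_lt_of_notMem (hI : I.OrdConnected) (hJ : J.OrdConnected) (hxI : x ∈ I)
    (hxJ : x ∈ J) {e d : ℝ≥0} (hed : e < d) (hU : x + diag n (2 * e) ∉ I)
    (hL : x + diag n (-(2 * e)) ∉ J) : dtriv I J x < d := by
  obtain ⟨α, hα, hαU⟩ := exists_add_diag_mem_upperBd hI hxI (by positivity) hU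
  obtain ⟨β, hβ, hβL⟩ := exists_add_diag_neg_mem_lowerBd hJ hxJ (by positivity) hL
  have h2e : ENNReal.ofReal (2 * e) < 2 * (d : ℝ≥0∞) := by
    have hed' : (e : ℝ) < d := hed
    rw [two_mul_coe_eq_ofReal, ENNReal.ofReal_lt_ofReal_iff (by linarith [e.coe_nonneg])]
    linarith
  refine dtriv_lt_iff.2 ⟨(dl_le_of_add_diag_mem hαU).trans_lt (lt_of_le_of_lt ?_ h2e),
    (dl_le_of_add_diag_mem hβL).trans_lt (lt_of_le_of_lt ?_ h2e)⟩
  · exact ENNReal.ofReal_le_ofReal (by rw [abs_of_nonneg hα.1]; exact hα.2)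
  · exact ENNReal.ofReal_le_ofReal (by rw [abs_neg, abs_of_nonneg hβ.1]; exact hβ.2)

end DiagonalDistance

lemma LinearMap.comp_ne_zero_of_surjective {R M₁ M₂ M₃ : Type*} [Semiring R] [AddCommMonoid M₁]
    [AddCommMonoid M₂] [AddCommMonoid M₃] [Module R M₁] [Module R M₂] [Module R M₃]
    {f : M₂ →ₗ[R] M₃} {g : M₁ →ₗ[R] M₂} (hg : Function.Surjective g) (hf : f ≠ 0) :
    f.comp g ≠ 0 :=
  fun h => hf ((LinearMap.cancel_right hg).1 (h.trans (LinearMap.zero_comp g).symm))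

lemma LinearMap.comp_ne_zero_of_injective {R M₁ M₂ M₃ : Type*} [Semiring R] [AddCommMonoid M₁]
    [AddCommMonoid M₂] [AddCommMonoid M₃] [Module R M₁] [Module R M₂] [Module R M₃]
    {f : M₂ →ₗ[R] M₃} {g : M₁ →ₗ[R] M₂} (hf : Function.Injective f) (hg : g ≠ 0) :
    f.comp g ≠ 0 :=
  fun h => hg ((LinearMap.cancel_left hf).1 (h.trans (LinearMap.comp_zero f).symm))

section Fibre

variable {n : ℕ} {k : Type*} [Field k] {I : Set (Pt n)} {x y : Pt n}

lemma subOf_of_mem (h : x ∈ I) : subOf k I x = ⊤ := if_pos h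

lemma subsingleton_subOf (h : x ∉ I) : Subsingleton (subOf k I x) := by
  rw [subOf, if_neg h]; infer_instance

lemma nontrivial_subOf (h : x ∈ I) : Nontrivial (subOf k I x) := by
  rw [subOf_of_mem h]
  exact nontrivial_of_ne ⟨1, Submodule.mem_top⟩ 0 fun h => one_ne_zero (congrArg Subtype.val h)

lemma mem_of_nontrivial_subOf (h : Nontrivial (subOf k I x)) : x ∈ I := by
  by_contra hx
  have := subsingleton_subOf (k := k) hx
  exact not_nontrivial _ h

lemma coe_eq_zero_of_notMem (h : x ∉ I) (v : subOf k I x) : (v : k) = 0 := by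
  have := subsingleton_subOf (k := k) h
  rw [Subsingleton.elim v 0, ZeroMemClass.coe_zero]

lemma mem_of_ne_zero_of_source {W : Type*} [AddCommGroup W] [Module k W]
    {f : subOf k I x →ₗ[k] W} (hf : f ≠ 0) : x ∈ I := by
  obtain ⟨v, hv⟩ := DFunLike.ne_iff.1 hf
  exact mem_of_nontrivial_subOf (nontrivial_of_ne v 0 fun h => hv (by simp [h]))

lemma mem_of_ne_zero_of_target {W : Type*} [AddCommGroup W] [Module k W]
    {f : W →ₗ[k] subOf k I x} (hf : f ≠ 0) : x ∈ I := by
  obtain ⟨v, hv⟩ := DFunLike.ne_iff.1 hf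
  exact mem_of_nontrivial_subOf (nontrivial_of_ne _ 0 hv)

@[simp] lemma coe_stepFun_apply (v : subOf k I x) :
    (stepFun I x y v : k) = if y ∈ I then (v : k) else 0 := rfl

lemma stepFun_bijective (hx : x ∈ I) (hy : y ∈ I) : Function.Bijective (stepFun (k := k) I x y) :=
  ⟨fun v w h => Subtype.ext (by simpa [hy] using congrArg Subtype.val h),
   fun w => ⟨⟨w, by simp [subOf, hx]⟩, Subtype.ext (by simp [hy])⟩⟩

lemma stepFun_ne_zero (hx : x ∈ I) (hy : y ∈ I) : stepFun (k := k) I x y ≠ 0 :=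
  have := nontrivial_subOf (k := k) hx
  LinearMap.ne_zero_of_injective (stepFun_bijective hx hy).1

lemma stepFun_eq_zero (hy : y ∉ I) : stepFun (k := k) I x y = 0 :=
  LinearMap.ext fun v => Subtype.ext (by simp [hy])

end Fibre

namespace PersMod

variable {n : ℕ} {k : Type*} [Field k] {M N : PersMod n k}

lemma ρ_ρ_apply (M : PersMod n k) {a b c : Pt n} (h₁ : a ≤ b) (h₂ : b ≤ c) (v : M.V a) :
    M.ρ h₂ (M.ρ h₁ v) = M.ρ (h₁.trans h₂) v := by
  rw [M.ρ_comp h₁ h₂, LinearMap.comp_apply]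

lemma Interleaved.symm {d : ℝ≥0} (h : M.Interleaved N d) : N.Interleaved M d :=
  let ⟨φ, ψ, hφ, hψ, hψφ, hφψ⟩ := h
  ⟨ψ, φ, hψ, hφ, hφψ, hψφ⟩

lemma dI_comm (M N : PersMod n k) : M.dI N = N.dI M :=
  le_antisymm (le_iInf₂ fun d h => iInf₂_le d h.symm) (le_iInf₂ fun d h => iInf₂_le d h.symm)

lemma dI_lt_iff {c : ℝ≥0∞} : M.dI N < c ↔ ∃ e : ℝ≥0, M.Interleaved N e ∧ (e : ℝ≥0∞) < c := by
  simp only [dI, iInf_lt_iff, exists_prop]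

lemma dI_le_of_forall_lt {δ : ℝ≥0} (h : ∀ δ' : ℝ≥0, δ < δ' → M.Interleaved N δ') :
    M.dI N ≤ δ :=
  ENNReal.le_of_forall_pos_le_add fun ε hε _ => by
    rw [← ENNReal.coe_add]
    exact iInf₂_le (δ + ε) (h _ (lt_add_of_pos_right δ hε))

lemma Interleaved.nontrivial {e : ℝ≥0} (h : M.Interleaved N e) {x : Pt n}
    (hρ : M.ρ ((le_add_diag x e.coe_nonneg).trans (le_add_diag _ e.coe_nonneg)) ≠ 0) :
    Nontrivial (N.V (x + diag n e)) := by
  obtain ⟨φ, ψ, -, -, hψφ, -⟩ := h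
  obtain ⟨v, hv⟩ := DFunLike.ne_iff.1 fun h0 : φ x = 0 =>
    hρ (by rw [hψφ, h0, LinearMap.comp_zero])
  exact nontrivial_of_ne _ 0 hv

/-- The structure map only realigns `x + t + d` with `x + (t + d)`, which differ as terms. -/
def sliceMap {d : ℝ≥0} (φ : ∀ x : Pt n, M.V x →ₗ[k] N.V (x + diag n d)) (x : Pt n) (t : Pt 1) :
    (M.slice x).V t →ₗ[k] (N.slice x).V (t + diag 1 d) :=
  (N.ρ (add_diag_add_diag x (t 0) d).le).comp (φ (x + diag n (t 0)))

variable {d : ℝ≥0} {φ : ∀ x : Pt n, M.V x →ₗ[k] N.V (x + diag n d)}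
  {ψ : ∀ x : Pt n, N.V x →ₗ[k] M.V (x + diag n d)}

lemma sliceMap_natural
    (hφ : ∀ {x y : Pt n} (h : x ≤ y), (φ y).comp (M.ρ h) = (N.ρ (add_le_add_left h _)).comp (φ x))
    (x : Pt n) {t t' : Pt 1} (h : t ≤ t') :
    (sliceMap φ x t').comp ((M.slice x).ρ h) =
      ((N.slice x).ρ (add_le_add_left h _)).comp (sliceMap φ x t) := by
  refine LinearMap.ext fun (v : M.V (x + diag n (t 0))) => ?_
  have h₁ : x + diag n (t 0) ≤ x + diag n (t' 0) := fun i => add_le_add_right (h 0) (x i)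
  show N.ρ _ (φ _ (M.ρ h₁ v)) = N.ρ (_ : _ ≤ x + diag n (t' 0 + d)) (N.ρ _ (φ _ v))
  rw [← LinearMap.comp_apply (φ _) (M.ρ h₁), hφ, LinearMap.comp_apply, ρ_ρ_apply]
  exact (N.ρ_ρ_apply _ _ _).symm

lemma sliceMap_triangle
    (hψ : ∀ {x y : Pt n} (h : x ≤ y), (ψ y).comp (N.ρ h) = (M.ρ (add_le_add_left h _)).comp (ψ x))
    (hψφ : ∀ x : Pt n, M.ρ ((le_add_diag x d.coe_nonneg).trans (le_add_diag _ d.coe_nonneg)) =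
      (ψ (x + diag n d)).comp (φ x))
    (x : Pt n) (t : Pt 1) :
    (M.slice x).ρ ((le_add_diag t d.coe_nonneg).trans (le_add_diag _ d.coe_nonneg)) =
      (sliceMap ψ x (t + diag 1 d)).comp (sliceMap φ x t) := by
  refine LinearMap.ext fun (v : M.V (x + diag n (t 0))) => ?_
  have h₁ := (add_diag_add_diag x (t 0) d).le
  show M.ρ (_ : _ ≤ x + diag n (t 0 + d + d)) v = M.ρ _ (ψ _ (N.ρ h₁ (φ _ v)))
  rw [← LinearMap.comp_apply (ψ _) (N.ρ h₁), hψ, LinearMap.comp_apply,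
    ← LinearMap.comp_apply (ψ _) (φ _), ← hψφ, ρ_ρ_apply]
  exact (M.ρ_ρ_apply _ _ _).symm

lemma Interleaved.slice (h : M.Interleaved N d) (x : Pt n) :
    (M.slice x).Interleaved (N.slice x) d :=
  let ⟨_, _, hφ, hψ, hψφ, hφψ⟩ := h
  ⟨sliceMap _ x, sliceMap _ x, sliceMap_natural hφ x, sliceMap_natural hψ x,
    sliceMap_triangle hψ hψφ x, sliceMap_triangle hφ hφψ x⟩

end PersMod

section DeltaStar

variable {n : ℕ} {k : Type*} [Field k]

lemma deltaStar_le_dI (M N : PersMod n k) : deltaStar M N ≤ M.dI N :=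
  iSup_le fun x => le_iInf₂ fun d h => iInf₂_le d (h.slice x)

lemma deltaStar_comm (M N : PersMod n k) : deltaStar M N = deltaStar N M := by
  simp only [deltaStar, PersMod.dI_comm (M.slice _)]

end DeltaStar

section Zigzag

variable {n : ℕ} {A : Set (Pt n)} {x y : Pt n}

lemma zigzag_symm (h : Zigzag A x y) : Zigzag A y x := by
  induction h with
  | refl => exact .refl
  | tail _ hstep ih => exact .head ⟨hstep.2.1, hstep.1, hstep.2.2.symm⟩ ih

lemma setOf_zigzag_eq (h : Zigzag A x y) : {q | Zigzag A x q} = {q | Zigzag A y q} :=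
  Set.ext fun _ => ⟨(zigzag_symm h).trans, h.trans⟩

lemma zigzag_of_le (hx : x ∈ A) (hy : y ∈ A) (hxy : x ≤ y) : Zigzag A x y :=
  Relation.ReflTransGen.single ⟨hx, hy, Or.inl hxy⟩

end Zigzag

section ComponentMap

variable {n : ℕ} {k : Type*} [Field k] {I J : Set (Pt n)} {d : ℝ} {x y : Pt n}

def InValidComponent (I J : Set (Pt n)) (d : ℝ) (x : Pt n) : Prop :=
  x ∈ I ∩ shiftSet J d ∧ MNValid I (shiftSet J d) {q | Zigzag (I ∩ shiftSet J d) x q}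

variable (k) in
def componentMap (I J : Set (Pt n)) (d : ℝ) (x : Pt n) :
    subOf k I x →ₗ[k] subOf k J (x + diag n d) :=
  if h : InValidComponent I J d x then
    Submodule.inclusion (by rw [subOf_of_mem (I := J) h.1.2]; exact le_top)
  else 0

@[simp] lemma coe_componentMap_apply (v : subOf k I x) :
    (componentMap k I J d x v : k) = if InValidComponent I J d x then (v : k) else 0 := by
  unfold componentMap; split_ifs <;> rfl

lemma inValidComponent_iff_of_le (hx : x ∈ I) (hxy : x ≤ y) :
    InValidComponent I J d y ↔ InValidComponent I J d x ∧ y + diag n d ∈ J := by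
  constructor
  · rintro ⟨hyA, hyV⟩
    have hxA : x ∈ I ∩ shiftSet J d := ⟨hx, (hyV y .refl).1 x hxy hx⟩
    rw [← setOf_zigzag_eq (zigzag_of_le hxA hyA hxy)] at hyV
    exact ⟨⟨hxA, hyV⟩, hyA.2⟩
  · rintro ⟨⟨hxA, hxV⟩, hyJ⟩
    have hyA : y ∈ I ∩ shiftSet J d := ⟨(hxV x .refl).2 y hxy hyJ, hyJ⟩
    rw [setOf_zigzag_eq (zigzag_of_le hxA hyA hxy)] at hxV
    exact ⟨hyA, hxV⟩

lemma componentMap_natural (h : x ≤ y) :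
    (componentMap k I J d y).comp (stepFun I x y) =
      (stepFun J (x + diag n d) (y + diag n d)).comp (componentMap k I J d x) := by
  refine LinearMap.ext fun v => Subtype.ext ?_
  simp only [LinearMap.comp_apply, coe_componentMap_apply, coe_stepFun_apply]
  by_cases hx : x ∈ I
  · have hiff := inValidComponent_iff_of_le (J := J) (d := d) hx h
    by_cases hy : InValidComponent I J d y
    · simp [hy, hy.1.1, hiff.1 hy]
    · by_cases hx' : InValidComponent I J d x <;> simp_all
  · simp [coe_eq_zero_of_notMem hx v]

end ComponentMap

section Sufficiency

variable {n : ℕ} {k : Type*} [Field k] {I J : Set (Pt n)} {d : ℝ≥0} {x : Pt n}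

lemma add_diag_mem_iff_inValidComponent
    (hmid : ∀ x ∈ I, x + diag n (2 * d) ∈ I → x + diag n d ∈ J)
    (hI : ∀ Q, IsComponent (I ∩ shiftSet J d) Q →
      MNValid I (shiftSet J d) Q ∨ Trivializable I (shiftSet J d) Q d)
    (hJ : ∀ Q, IsComponent (J ∩ shiftSet I d) Q →
      MNValid J (shiftSet I d) Q ∨ Trivializable J (shiftSet I d) Q d)
    (hx : x ∈ I) :
    x + diag n d + diag n d ∈ I ↔
      InValidComponent I J d x ∧ InValidComponent J I d (x + diag n d) := by
  refine ⟨fun h2 => ?_, fun h => h.2.1.2⟩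
  have h2' : x + diag n (2 * d) ∈ I := by rwa [add_diag_add_diag, ← two_mul] at h2
  have hxA : x ∈ I ∩ shiftSet J d := ⟨hx, hmid x hx h2'⟩
  have hyA : x + diag n d ∈ J ∩ shiftSet I d := ⟨hxA.2, h2⟩
  refine ⟨⟨hxA, (hI _ ⟨x, hxA, rfl⟩).resolve_right fun hT => (hT.notMem .refl).1 h2'⟩,
    ⟨hyA, (hJ _ ⟨_, hyA, rfl⟩).resolve_right fun hT => (hT.notMem .refl).2 ?_⟩⟩
  show x + diag n d + diag n (-(2 * d)) + diag n d ∈ I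
  rwa [add_diag_add_diag, add_diag_add_diag, show (d : ℝ) + (-(2 * d) + d) = 0 by ring,
    add_diag_zero]

lemma componentMap_triangle
    (hmid : ∀ x ∈ I, x + diag n (2 * d) ∈ I → x + diag n d ∈ J)
    (hI : ∀ Q, IsComponent (I ∩ shiftSet J d) Q →
      MNValid I (shiftSet J d) Q ∨ Trivializable I (shiftSet J d) Q d)
    (hJ : ∀ Q, IsComponent (J ∩ shiftSet I d) Q →
      MNValid J (shiftSet I d) Q ∨ Trivializable J (shiftSet I d) Q d) (x : Pt n) :
    stepFun I x (x + diag n d + diag n d) =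
      (componentMap k J I d (x + diag n d)).comp (componentMap k I J d x) := by
  refine LinearMap.ext fun v => Subtype.ext ?_
  simp only [LinearMap.comp_apply, coe_componentMap_apply, coe_stepFun_apply]
  by_cases hx : x ∈ I
  · have hiff := add_diag_mem_iff_inValidComponent hmid hI hJ hx
    by_cases h2 : x + diag n d + diag n d ∈ I
    · simp [h2, hiff.1 h2]
    · by_cases hx' : InValidComponent I J d x <;> simp_all
  · simp [coe_eq_zero_of_notMem hx v]

lemma interleaved_of_components (hIi : IsPInterval I) (hJi : IsPInterval J)
    (hmidI : ∀ x ∈ I, x + diag n (2 * d) ∈ I → x + diag n d ∈ J)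
    (hmidJ : ∀ x ∈ J, x + diag n (2 * d) ∈ J → x + diag n d ∈ I)
    (hI : ∀ Q, IsComponent (I ∩ shiftSet J d) Q →
      MNValid I (shiftSet J d) Q ∨ Trivializable I (shiftSet J d) Q d)
    (hJ : ∀ Q, IsComponent (J ∩ shiftSet I d) Q →
      MNValid J (shiftSet I d) Q ∨ Trivializable J (shiftSet I d) Q d) :
    (IntervalMod k I hIi).Interleaved (IntervalMod k J hJi) d :=
  ⟨componentMap k I J d, componentMap k J I d, componentMap_natural, componentMap_natural,
    componentMap_triangle hmidI hI hJ, componentMap_triangle hmidJ hJ hI⟩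

lemma add_diag_mem_of_slice_interleaved (hIi : IsPInterval I) (hJi : IsPInterval J)
    {e : ℝ≥0} (hed : e ≤ d)
    (h : ((IntervalMod k I hIi).slice x).Interleaved ((IntervalMod k J hJi).slice x) e)
    (hx : x ∈ I) (h2 : x + diag n (2 * d) ∈ I) : x + diag n d ∈ J := by
  have hed' : (e : ℝ) ≤ d := hed
  have hseg : ∀ a : ℝ, 0 ≤ a → a ≤ 2 * d → x + diag n a ∈ I := fun a ha0 ha =>
    hIi.ordConnected.out hx h2 ⟨le_add_diag x ha0, add_diag_mono x ha⟩
  -- the slice segment `[t, t + 2e]` lies in `[0, 2d]` and has midpoint `d`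
  let t : Pt 1 := fun _ => d - e
  have hρ : ((IntervalMod k I hIi).slice x).ρ
      ((le_add_diag t e.coe_nonneg).trans (le_add_diag _ e.coe_nonneg)) ≠ 0 :=
    stepFun_ne_zero (hseg _ (by simp [t]; linarith) (by simp [t]; linarith [e.coe_nonneg]))
      (hseg _ (by simp [t, diag]; linarith [e.coe_nonneg]) (by simp [t, diag]; linarith))
  have := mem_of_nontrivial_subOf (h.nontrivial hρ)
  simpa [t, diag] using this

lemma add_diag_mem_of_deltaStar_lt (hIi : IsPInterval I) (hJi : IsPInterval J)
    (h : deltaStar (IntervalMod k I hIi) (IntervalMod k J hJi) < d)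
    (x : Pt n) (hx : x ∈ I) (h2 : x + diag n (2 * d) ∈ I) : x + diag n d ∈ J := by
  obtain ⟨e, he, hed⟩ := PersMod.dI_lt_iff.1 ((le_iSup (fun y =>
    ((IntervalMod k I hIi).slice y).dI ((IntervalMod k J hJi).slice y)) x).trans_lt h)
  exact add_diag_mem_of_slice_interleaved hIi hJi (ENNReal.coe_le_coe.1 hed.le) he hx h2

end Sufficiency

section Necessity

def FibreMapsNatural {n : ℕ} {k : Type*} [Field k] (I J : Set (Pt n)) (e : ℝ)
    (φ : ∀ x : Pt n, subOf k I x →ₗ[k] subOf k J (x + diag n e)) : Prop :=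
  ∀ {x y : Pt n} (h : x ≤ y),
    (φ y).comp (stepFun I x y) = (stepFun J (x + diag n e) (y + diag n e)).comp (φ x)

variable {n : ℕ} {k : Type*} [Field k] {I J : Set (Pt n)} {e d : ℝ≥0} {x y : Pt n}
  {φ : ∀ x : Pt n, subOf k I x →ₗ[k] subOf k J (x + diag n e)}

lemma map_ne_zero_of_le
    (hφ : FibreMapsNatural I J e φ)
    (hxy : x ≤ y) (hx : x ∈ I) (hy : y ∈ I) (hφy : φ y ≠ 0) : φ x ≠ 0 := fun hφx => by
  have := LinearMap.comp_ne_zero_of_surjective (stepFun_bijective hx hy).2 hφy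
  rw [hφ hxy, hφx, LinearMap.comp_zero] at this
  exact this rfl

lemma map_comp_stepFun_ne_zero
    (hφ : FibreMapsNatural I J e φ)
    (hxy : x ≤ y) (hφx : φ x ≠ 0) (hy : y + diag n e ∈ J) : (φ y).comp (stepFun I x y) ≠ 0 := by
  rw [hφ hxy]
  exact LinearMap.comp_ne_zero_of_injective
    (stepFun_bijective (mem_of_ne_zero_of_target hφx) hy).1 hφx

lemma map_ne_zero_iff_of_le (hJ : J.OrdConnected) (hed : e ≤ d)
    (hφ : FibreMapsNatural I J e φ)
    (hxy : x ≤ y) (hx : x ∈ I) (hy : y ∈ I ∩ shiftSet J d) : φ x ≠ 0 ↔ φ y ≠ 0 := by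
  refine ⟨fun hφx hφy => ?_, map_ne_zero_of_le hφ hxy hx hy.1⟩
  have hye : y + diag n e ∈ J := hJ.out (mem_of_ne_zero_of_target hφx) hy.2
    ⟨add_le_add_left hxy _, add_diag_mono y (NNReal.coe_le_coe.2 hed)⟩
  exact map_comp_stepFun_ne_zero hφ hxy hφx hye (by rw [hφy, LinearMap.zero_comp])

lemma map_ne_zero_iff_of_zigzag (hJ : J.OrdConnected) (hed : e ≤ d)
    (hφ : FibreMapsNatural I J e φ)
    (h : Zigzag (I ∩ shiftSet J d) x y) (hx : x ∈ I ∩ shiftSet J d) :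
    y ∈ I ∩ shiftSet J d ∧ (φ x ≠ 0 ↔ φ y ≠ 0) := by
  induction h with
  | refl => exact ⟨hx, .rfl⟩
  | tail _ hstep ih =>
    obtain ⟨hb, hc, hbc | hcb⟩ := hstep
    · exact ⟨hc, ih.2.trans (map_ne_zero_iff_of_le hJ hed hφ hbc hb.1 hc)⟩
    · exact ⟨hc, ih.2.trans (map_ne_zero_iff_of_le hJ hed hφ hcb hc.1 hb).symm⟩

lemma mnValid_singleton_of_map_ne_zero (hJ : J.OrdConnected) (hed : e ≤ d)
    (hφ : FibreMapsNatural I J e φ)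
    (hx : x ∈ I ∩ shiftSet J d) (hφx : φ x ≠ 0) : MNValid I (shiftSet J d) {x} := by
  have hed' : (e : ℝ) ≤ d := hed
  simp only [MNValid, Set.mem_singleton_iff, forall_eq]
  have hxe : x + diag n e ∈ J := mem_of_ne_zero_of_target hφx
  refine ⟨fun y hyx hy => ?_, fun z hxz hz => by_contra fun hzI => ?_⟩
  · have hye : y + diag n e ∈ J :=
      mem_of_ne_zero_of_target (map_ne_zero_of_le hφ hyx hy hx.1 hφx)
    exact hJ.out hye hx.2 ⟨add_diag_mono y hed', add_le_add_left hyx _⟩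
  · have hze : z + diag n e ∈ J := hJ.out hxe hz ⟨add_le_add_left hxz _, add_diag_mono z hed'⟩
    exact map_comp_stepFun_ne_zero hφ hxz hφx hze (by rw [stepFun_eq_zero hzI, LinearMap.comp_zero])

lemma dtriv_lt_of_map_eq_zero (hI : I.OrdConnected) (hJ : J.OrdConnected) (hed : e < d)
    {ψ : ∀ x : Pt n, subOf k J x →ₗ[k] subOf k I (x + diag n e)}
    (hφ : FibreMapsNatural I J e φ)
    (hψφ : ∀ x, stepFun I x (x + diag n e + diag n e) = (ψ (x + diag n e)).comp (φ x))
    (hφψ : ∀ x, stepFun J x (x + diag n e + diag n e) = (φ (x + diag n e)).comp (ψ x))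
    (hx : x ∈ I ∩ shiftSet J d) (hφx : φ x = 0) : dtriv I (shiftSet J d) x < d := by
  have hed' : (e : ℝ) < d := hed
  refine dtriv_lt_of_notMem hI (hJ.shiftSet d) hx.1 hx.2 hed (fun h2 => ?_) (fun h2 => ?_)
  · refine stepFun_ne_zero (k := k) hx.1 (y := x + diag n e + diag n e)
      (by rwa [add_diag_add_diag, ← two_mul]) ?_
    rw [hψφ, hφx, LinearMap.comp_zero]
  · set p := x + diag n (-(2 * e)) + diag n d
    have hp2 : p + diag n e + diag n e ∈ J := by
      have : p + diag n e + diag n e = x + diag n d := by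
        simp only [p, add_diag_add_diag]
        ring_nf
      exact this ▸ hx.2
    have hφq : φ (p + diag n e) ≠ 0 := fun h0 =>
      stepFun_ne_zero (I := J) (x := p) h2 hp2 (by rw [hφψ, h0, LinearMap.zero_comp])
    have hxq : x ≤ p + diag n e := by
      simp only [p, add_diag_add_diag]
      exact le_add_diag x (by linarith [e.coe_nonneg])
    exact map_ne_zero_of_le hφ hxq hx.1 (mem_of_ne_zero_of_source hφq) hφq hφx

lemma mnValid_or_trivializable_of_interleaved (hI : IsPInterval I) (hJ : IsPInterval J)
    (hed : e < d) (h : (IntervalMod k I hI).Interleaved (IntervalMod k J hJ) e)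
    (Q : Set (Pt n)) (hQ : IsComponent (I ∩ shiftSet J d) Q) :
    MNValid I (shiftSet J d) Q ∨ Trivializable I (shiftSet J d) Q d := by
  obtain ⟨φ, ψ, hφ, -, hψφ, hφψ⟩ := h
  obtain ⟨p, hp, rfl⟩ := hQ
  have hQ x (hx : Zigzag _ p x) := map_ne_zero_iff_of_zigzag hJ.ordConnected hed.le hφ hx hp
  by_cases hφp : φ p = 0
  · exact .inr fun x hx => dtriv_lt_of_map_eq_zero hI.ordConnected hJ.ordConnected hed hφ hψφ
      hφψ (hQ x hx).1 (not_not.1 fun h => (hQ x hx).2.2 h hφp)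
  · exact .inl fun x hx => mnValid_singleton_of_map_ne_zero hJ.ordConnected hed.le hφ
      (hQ x hx).1 ((hQ x hx).2.1 hφp) x rfl

end Necessity

/-- criterion for d_I(M,N) ≤ δ for interval modules: δ ≥ δ* and,
for all δ' > δ, every intersection component of M and N_{→δ'} (and
symmetrically of M_{→δ'} and N) is valid or δ'-trivializable. -/
theorem stmt8 {n : ℕ} {k : Type*} [Field k] (IM IN : Set (Pt n))
    (hM : IsPInterval IM) (hN : IsPInterval IN) (δ : ℝ≥0) :
    (IntervalMod k IM hM).dI (IntervalMod k IN hN) ≤ (δ : ℝ≥0∞) ↔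
      (deltaStar (IntervalMod k IM hM) (IntervalMod k IN hN) ≤ (δ : ℝ≥0∞) ∧
       ∀ δ' : ℝ≥0, δ < δ' →
         (∀ Q : Set (Pt n), IsComponent (IM ∩ shiftSet IN (δ' : ℝ)) Q →
            MNValid IM (shiftSet IN (δ' : ℝ)) Q ∨
              Trivializable IM (shiftSet IN (δ' : ℝ)) Q (δ' : ℝ≥0∞)) ∧
         (∀ Q : Set (Pt n), IsComponent (IN ∩ shiftSet IM (δ' : ℝ)) Q →
            MNValid IN (shiftSet IM (δ' : ℝ)) Q ∨
              Trivializable IN (shiftSet IM (δ' : ℝ)) Q (δ' : ℝ≥0∞))) := by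
  constructor
  · intro hdI
    refine ⟨(deltaStar_le_dI _ _).trans hdI, fun δ' hδ' => ?_⟩
    obtain ⟨e, he, hlt⟩ := PersMod.dI_lt_iff.1 (hdI.trans_lt (ENNReal.coe_lt_coe.2 hδ'))
    have hed : e < δ' := ENNReal.coe_lt_coe.1 hlt
    exact ⟨mnValid_or_trivializable_of_interleaved hM hN hed he,
      mnValid_or_trivializable_of_interleaved hN hM hed he.symm⟩
  · rintro ⟨hstar, hcomp⟩
    refine PersMod.dI_le_of_forall_lt fun δ' hδ' => ?_
    have hstar' := hstar.trans_lt (ENNReal.coe_lt_coe.2 hδ')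
    exact interleaved_of_components hM hN (add_diag_mem_of_deltaStar_lt hM hN hstar')
      (add_diag_mem_of_deltaStar_lt hN hM (deltaStar_comm (IntervalMod k IM hM) _ ▸ hstar'))
      (hcomp δ' hδ').1 (hcomp δ' hδ').2
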